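/- For any acyclic netlist circuit c, the induced closure function F_c is idempotent: F_c(F_c(s)) = F_c(s) for every circuit state s. -/

import Mathlib

inductive V : Type
  | zero | one | X | T
deriving DecidableEq

instance : Fintype V := ⟨{V.zero, V.one, V.X, V.T}, fun x => by cases x <;> simp⟩

def vleB : V → V → Bool := fun a b =>
  a = b || a = V.X || b = V.T

def vlub : V → V → V
  | V.X, b => b
  | a, V.X => a
  | a, b => if a = b then a else V.T

def vglb : V → V → V
  | V.T, b => b
  | a, V.T => a
  | a, b => if a = b then a else V.X

instance : LE V := ⟨fun a b => vleB a b = true⟩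
instance : DecidableRel (α := V) (· ≤ ·) := fun a b => inferInstanceAs (Decidable (vleB a b = true))

instance : Lattice V where
  le := (· ≤ ·)
  le_refl := by decide
  le_trans := by decide
  le_antisymm := by decide
  sup := vlub
  le_sup_left := by decide
  le_sup_right := by decide
  sup_le := by decide
  inf := vglb
  inf_le_left := by decide
  inf_le_right := by decide
  le_inf := by decide

instance : BoundedOrder V where
  top := V.T
  le_top := by decide
  bot := V.X
  bot_le := by decide

def vand : V → V → V
  | V.T, _ => V.T
  | _, V.T => V.T
  | V.zero, _ => V.zero
  | _, V.zero => V.zero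
  | V.one, V.one => V.one
  | _, _ => V.X

def vor : V → V → V
  | V.T, _ => V.T
  | _, V.T => V.T
  | V.one, _ => V.one
  | _, V.one => V.one
  | V.zero, V.zero => V.zero
  | _, _ => V.X

def vnot : V → V
  | V.zero => V.one
  | V.one => V.zero
  | V.X => V.X
  | V.T => V.T


/-- The definition of a node in an acyclic netlist. A node `n` is either a circuit
input, the output of a register (whose input is some node `inp`), or the output of
a gate whose inputs are nodes with index strictly below `n` (acyclicity). -/
inductive NodeDefAt (n : ℕ) : Type
  | input
  | reg (inp : ℕ)
  | andg (p q : Fin n)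
  | org (p q : Fin n)
  | notg (p : Fin n)

/-- An acyclic netlist: a gate definition for every node. -/
structure Netlist where
  defn : (n : ℕ) → NodeDefAt n

/-- The induced closure function of a netlist: forwards propagation of
information within a single time-point. -/
def Fc (c : Netlist) (s : ℕ → V) : ℕ → V
  | n =>
    match c.defn n with
    | .input => s n
    | .reg _ => s n
    | .andg p q => vand (Fc c s p) (Fc c s q) ⊔ s n
    | .org p q => vor (Fc c s p) (Fc c s q) ⊔ s n
    | .notg p => vnot (Fc c s p) ⊔ s n
  termination_by n => n
  decreasing_by all_goals exact Fin.is_lt _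

/-- The induced closure function of any acyclic netlist is idempotent. -/
theorem Fc_idempotent (c : Netlist) (s : ℕ → V) :
    Fc c (Fc c s) = Fc c s := by
  funext n
  induction n using Nat.strong_induction_on with
  | _ n ih =>
    rw [Fc, Fc]
    -- At a gate node the outer pass recomputes the gate output `g` (unchanged by induction)
    -- and joins it to `g ⊔ s n`, which absorbs it.
    rcases c.defn n with _ | _ | ⟨p, q⟩ | ⟨p, q⟩ | p <;>
      simp only [ih _ (Fin.is_lt _), sup_left_idem]
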